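/- arXiv:0804.4427 — 3 statements merged into one kernel-verified Lean document; each statement's English description precedes it below -/
import Mathlib

section
/- Two functions f, g ∈ L^1(μ) have μ-essentially disjoint supports if and only if ‖f + g‖₁ + ‖f - g‖₁ = 2(‖f‖₁ + ‖g‖₁). -/
/-!
Pointwise, `|a + b| + |a - b| = 2 max(|a|, |b|) = 2 (|a| + |b|) - 2 min(|a|, |b|)`, so
`‖f + g‖₁ + ‖f - g‖₁ ≤ 2 (‖f‖₁ + ‖g‖₁)`, with equality iff the integrable deficit
`2 min(|f|, |g|)` vanishes almost everywhere, i.e. iff `f g = 0` almost everywhere.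
-/

open MeasureTheory

section AbsIdentities

variable {α : Type*} [CommRing α] [LinearOrder α] [IsStrictOrderedRing α]

theorem abs_add_add_abs_sub (a b : α) : |a + b| + |a - b| = 2 * max |a| |b| := by
  rcases abs_cases (a + b) with ⟨h1, h1'⟩ | ⟨h1, h1'⟩ <;>
  rcases abs_cases (a - b) with ⟨h2, h2'⟩ | ⟨h2, h2'⟩ <;>
  rcases max_cases |a| |b| with ⟨h3, h3'⟩ | ⟨h3, h3'⟩ <;>
  rcases abs_cases a with ⟨h4, h4'⟩ | ⟨h4, h4'⟩ <;>
  rcases abs_cases b with ⟨h5, h5'⟩ | ⟨h5, h5'⟩ <;>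
  linarith

theorem abs_add_add_abs_sub_add_two_mul_min (a b : α) :
    |a + b| + |a - b| + 2 * min |a| |b| = 2 * (|a| + |b|) := by
  rw [abs_add_add_abs_sub, ← mul_add, max_add_min]

theorem abs_add_add_abs_sub_le (a b : α) : |a + b| + |a - b| ≤ 2 * (|a| + |b|) := by
  have := abs_add_add_abs_sub_add_two_mul_min a b
  have : 0 ≤ min |a| |b| := le_min (abs_nonneg a) (abs_nonneg b)
  linarith

theorem min_abs_abs_eq_zero_iff (a b : α) : min |a| |b| = 0 ↔ a = 0 ∨ b = 0 := by
  rw [← (le_min (abs_nonneg a) (abs_nonneg b)).ge_iff_eq', min_le_iff, abs_nonpos_iff,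
    abs_nonpos_iff]

theorem abs_add_add_abs_sub_eq_iff (a b : α) :
    |a + b| + |a - b| = 2 * (|a| + |b|) ↔ a = 0 ∨ b = 0 := by
  rw [← abs_add_add_abs_sub_add_two_mul_min a b, left_eq_add, mul_eq_zero_iff_left two_ne_zero,
    min_abs_abs_eq_zero_iff]

end AbsIdentities

/-- `f, g ∈ L^1(μ)` have `μ`-essentially disjoint supports iff
`‖f + g‖₁ + ‖f - g‖₁ = 2(‖f‖₁ + ‖g‖₁)`. -/
theorem stmt2 {Ω : Type*} [MeasurableSpace Ω] (μ : Measure Ω)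
    (f g : Ω → ℝ) (hf : Integrable f μ) (hg : Integrable g μ) :
    μ (Function.support f ∩ Function.support g) = 0 ↔
      (∫ x, |f x + g x| ∂μ) + (∫ x, |f x - g x| ∂μ)
        = 2 * ((∫ x, |f x| ∂μ) + (∫ x, |g x| ∂μ)) := by
  have hsum : Integrable (fun x => |f x + g x|) μ := (hf.add hg).abs
  have hdiff : Integrable (fun x => |f x - g x|) μ := (hf.sub hg).abs
  have hlhs : Integrable (fun x => |f x + g x| + |f x - g x|) μ := hsum.add hdiff
  have hbound : Integrable (fun x => 2 * (|f x| + |g x|)) μ := (hf.abs.add hg.abs).const_mul 2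
  rw [← integral_add hsum hdiff, ← integral_add hf.abs hg.abs, ← integral_const_mul,
    integral_eq_iff_of_ae_le hlhs hbound
      (ae_of_all _ fun x => abs_add_add_abs_sub_le (f x) (g x)),
    Filter.EventuallyEq, ae_iff]
  simp only [abs_add_add_abs_sub_eq_iff, not_or]
  rfl
end

section
/- Let (Ω, Σ, μ) be a positive measure space and consider real L^∞(μ). If T, S are surjective linear isometries of L^∞(μ) and A ∈ Σ is such that T(χ_A) ≠ S(χ_A) in L^∞(μ), then ‖T χ_A − S χ_A‖_∞ ≥ 1. -/
/-!
The extreme points of the unit ball of real `L^∞(μ)` are exactly the functions with `|f| = 1`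
a.e.: any other `f` in the ball is the midpoint of `f ± (1 - |f|)`. Surjective linear isometries
permute these extreme points, and `2χ_A = (2χ_A - 1) + 1` is a sum of two of them, so `T χ_A`
and `S χ_A` are halves of sums of two `±1`-valued functions, hence integer-valued a.e. Distinct
integer-valued functions are at `L^∞`-distance at least `1`.
-/

open MeasureTheory ENNReal Metric Set

theorem LinearIsometryEquiv.image_extremePoints_closedBall {E F : Type*}
    [SeminormedAddCommGroup E] [NormedSpace ℝ E] [SeminormedAddCommGroup F] [NormedSpace ℝ F]
    (T : E ≃ₗᵢ[ℝ] F) (r : ℝ) :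
    T '' extremePoints ℝ (closedBall 0 r) = extremePoints ℝ (closedBall 0 r) := by
  rw [image_extremePoints, T.image_closedBall]
  simp

namespace MeasureTheory.Lp

variable {Ω Ω' E : Type*} [MeasurableSpace Ω] [MeasurableSpace Ω'] {μ : Measure Ω}
  {ν : Measure Ω'}

theorem norm_top_le_iff [NormedAddCommGroup E] {f : Lp E ∞ μ} {C : ℝ} (hC : 0 ≤ C) :
    ‖f‖ ≤ C ↔ ∀ᵐ x ∂μ, ‖f x‖ ≤ C := by
  have hfin : eLpNormEssSup f μ ≠ ∞ := by
    simpa [eLpNorm_exponent_top] using (Lp.memLp f).eLpNorm_lt_top.ne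
  rw [Lp.norm_def, eLpNorm_exponent_top, ← ENNReal.le_ofReal_iff_toReal_le hfin hC]
  constructor
  · intro h
    filter_upwards [ae_le_eLpNormEssSup (f := f) (μ := μ)] with x hx
    rw [← ofReal_norm] at hx
    exact (ENNReal.ofReal_le_ofReal_iff hC).1 (hx.trans h)
  · exact eLpNormEssSup_le_of_ae_bound

theorem mem_closedBall_zero_iff_ae_abs_le {f : Lp ℝ ∞ μ} {r : ℝ} (hr : 0 ≤ r) :
    f ∈ closedBall 0 r ↔ ∀ᵐ x ∂μ, |f x| ≤ r := by
  simp only [mem_closedBall_zero_iff, norm_top_le_iff hr, Real.norm_eq_abs]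

theorem ae_abs_eq_one_of_mem_extremePoints {f : Lp ℝ ∞ μ}
    (hf : f ∈ extremePoints ℝ (closedBall 0 1)) : ∀ᵐ x ∂μ, |f x| = 1 := by
  have hf1 := (mem_closedBall_zero_iff_ae_abs_le zero_le_one).1 hf.1
  have hmem : MemLp (fun x => 1 - |f x|) ∞ μ := (memLp_top_const 1).sub (Lp.memLp f).abs
  set h := hmem.toLp _
  have hh : ⇑h =ᵐ[μ] fun x => 1 - |f x| := hmem.coeFn_toLp
  have hadd : f + h ∈ closedBall 0 1 := by
    rw [mem_closedBall_zero_iff_ae_abs_le zero_le_one]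
    filter_upwards [Lp.coeFn_add f h, hh, hf1] with x hx hhx hfx
    rw [hx, Pi.add_apply, hhx]
    exact abs_le.2 ⟨by linarith [neg_abs_le (f x)], by linarith [le_abs_self (f x)]⟩
  have hsub : f - h ∈ closedBall 0 1 := by
    rw [mem_closedBall_zero_iff_ae_abs_le zero_le_one]
    filter_upwards [Lp.coeFn_sub f h, hh, hf1] with x hx hhx hfx
    rw [hx, Pi.sub_apply, hhx]
    exact abs_le.2 ⟨by linarith [neg_abs_le (f x)], by linarith [le_abs_self (f x)]⟩
  have hseg : f ∈ openSegment ℝ (f + h) (f - h) :=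
    ⟨1 / 2, 1 / 2, by norm_num, by norm_num, by norm_num, by module⟩
  have h0 : h = 0 := by simpa using hf.2 hadd hsub hseg
  filter_upwards [hh, h0 ▸ Lp.coeFn_zero ℝ ∞ μ] with x hx hx0
  simp only [hx0, Pi.zero_apply] at hx
  linarith

theorem mem_extremePoints_of_ae_abs_eq_one {f : Lp ℝ ∞ μ} (hf : ∀ᵐ x ∂μ, |f x| = 1) :
    f ∈ extremePoints ℝ (closedBall 0 1) := by
  refine ⟨(mem_closedBall_zero_iff_ae_abs_le zero_le_one).2 (hf.mono fun x hx => hx.le), ?_⟩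
  rintro g hg k hk ⟨a, b, ha, hb, hab, rfl⟩
  rw [mem_closedBall_zero_iff_ae_abs_le zero_le_one] at hg hk
  refine Lp.ext ?_
  filter_upwards [hf, hg, hk, Lp.coeFn_add (a • g) (b • k), Lp.coeFn_smul a g,
    Lp.coeFn_smul b k] with x hx hgx hkx hsum hag hbk
  rw [hsum, Pi.add_apply, hag, hbk, Pi.smul_apply, Pi.smul_apply] at hx ⊢
  have hext : a • g x + b • k x ∈ extremePoints ℝ (Icc (-1 : ℝ) 1) := by
    rw [extremePoints_Icc (by norm_num), mem_insert_iff, mem_singleton_iff]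
    exact ((abs_eq zero_le_one).1 hx).symm
  exact hext.2 (abs_le.1 hgx) (abs_le.1 hkx) ⟨a, b, ha, hb, hab, rfl⟩

theorem mem_extremePoints_closedBall_iff {f : Lp ℝ ∞ μ} :
    f ∈ extremePoints ℝ (closedBall 0 1) ↔ ∀ᵐ x ∂μ, |f x| = 1 :=
  ⟨ae_abs_eq_one_of_mem_extremePoints, mem_extremePoints_of_ae_abs_eq_one⟩

theorem exists_two_smul_eq_add_of_ae_eq_indicator {χ : Lp ℝ ∞ μ} {A : Set Ω}
    (hχ : ⇑χ =ᵐ[μ] A.indicator fun _ => (1 : ℝ)) :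
    ∃ u ∈ extremePoints ℝ (closedBall (0 : Lp ℝ ∞ μ) 1),
      ∃ v ∈ extremePoints ℝ (closedBall (0 : Lp ℝ ∞ μ) 1), (2 : ℝ) • χ = u + v := by
  set one : Lp ℝ ∞ μ := (memLp_top_const (1 : ℝ)).toLp _
  have hone : ⇑one =ᵐ[μ] fun _ => (1 : ℝ) := MemLp.coeFn_toLp _
  refine ⟨(2 : ℝ) • χ - one, mem_extremePoints_of_ae_abs_eq_one ?_,
    one, mem_extremePoints_of_ae_abs_eq_one ?_, (sub_add_cancel _ _).symm⟩
  · filter_upwards [Lp.coeFn_sub ((2 : ℝ) • χ) one, Lp.coeFn_smul (2 : ℝ) χ, hone, hχ]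
      with x hsub hsmul hx1 hχx
    rw [hsub, Pi.sub_apply, hsmul, Pi.smul_apply, hx1, hχx]
    by_cases hx : x ∈ A <;> norm_num [hx]
  · filter_upwards [hone] with x hx
    simp [hx]

theorem ae_exists_int_eq_of_two_smul_eq_add {f u v : Lp ℝ ∞ μ} (hu : ∀ᵐ x ∂μ, |u x| = 1)
    (hv : ∀ᵐ x ∂μ, |v x| = 1) (h : (2 : ℝ) • f = u + v) : ∀ᵐ x ∂μ, ∃ n : ℤ, f x = n := by
  filter_upwards [hu, hv, h ▸ Lp.coeFn_smul (2 : ℝ) f, Lp.coeFn_add u v]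
    with x hux hvx hsmul hadd
  rw [hadd, Pi.add_apply, Pi.smul_apply, smul_eq_mul] at hsmul
  rcases (abs_eq zero_le_one).1 hux with hu1 | hu1 <;>
    rcases (abs_eq zero_le_one).1 hvx with hv1 | hv1
  exacts [⟨1, by push_cast; linarith⟩, ⟨0, by push_cast; linarith⟩,
    ⟨0, by push_cast; linarith⟩, ⟨-1, by push_cast; linarith⟩]

theorem eq_of_ae_exists_int_eq_of_norm_sub_lt_one {f g : Lp ℝ ∞ μ}
    (hf : ∀ᵐ x ∂μ, ∃ n : ℤ, f x = n) (hg : ∀ᵐ x ∂μ, ∃ n : ℤ, g x = n) (hfg : ‖f - g‖ < 1) :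
    f = g := by
  refine Lp.ext ?_
  filter_upwards [hf, hg, (norm_top_le_iff (norm_nonneg (f - g))).1 le_rfl, Lp.coeFn_sub f g]
    with x ⟨m, hm⟩ ⟨n, hn⟩ hx hsub
  rw [hsub, Pi.sub_apply, hm, hn, Real.norm_eq_abs, ← Int.cast_sub, ← Int.cast_abs] at hx
  have : m - n = 0 := Int.abs_lt_one_iff.1 (by exact_mod_cast hx.trans_lt hfg)
  rw [hm, hn, sub_eq_zero.1 this]

theorem ae_exists_int_eq_map_of_ae_eq_indicator (T : Lp ℝ ∞ μ ≃ₗᵢ[ℝ] Lp ℝ ∞ ν)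
    {χ : Lp ℝ ∞ μ} {A : Set Ω}
    (hχ : ⇑χ =ᵐ[μ] A.indicator fun _ => (1 : ℝ)) : ∀ᵐ x ∂ν, ∃ n : ℤ, T χ x = n := by
  obtain ⟨u, hu, v, hv, huv⟩ := exists_two_smul_eq_add_of_ae_eq_indicator hχ
  have hT : ∀ w ∈ extremePoints ℝ (closedBall (0 : Lp ℝ ∞ μ) 1), ∀ᵐ x ∂ν, |T w x| = 1 :=
    fun w hw => mem_extremePoints_closedBall_iff.1 <|
      T.image_extremePoints_closedBall 1 ▸ mem_image_of_mem T hw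
  exact ae_exists_int_eq_of_two_smul_eq_add (hT u hu) (hT v hv) (by rw [← map_smul, huv, map_add])

end MeasureTheory.Lp

theorem stmt12_general {Ω : Type*} [MeasurableSpace Ω] (μ : Measure Ω)
    (T S : Lp ℝ ∞ μ ≃ₗᵢ[ℝ] Lp ℝ ∞ μ)
    (A : Set Ω) (χ : Lp ℝ ∞ μ)
    (hχ : (χ : Ω → ℝ) =ᵐ[μ] Set.indicator A fun _ => (1:ℝ))
    (hTS : T χ ≠ S χ) :
    1 ≤ ‖T χ - S χ‖ := by
  by_contra! hlt
  exact hTS <| Lp.eq_of_ae_exists_int_eq_of_norm_sub_lt_one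
    (Lp.ae_exists_int_eq_map_of_ae_eq_indicator T hχ)
    (Lp.ae_exists_int_eq_map_of_ae_eq_indicator S hχ) hlt

/-- if `T, S` are surjective linear isometries of real `L^∞(μ)` and
`A` is measurable with `T(χ_A) ≠ S(χ_A)`, then `‖T χ_A − S χ_A‖_∞ ≥ 1`. -/
theorem stmt12 {Ω : Type*} [MeasurableSpace Ω] (μ : Measure Ω)
    (T S : Lp ℝ ∞ μ ≃ₗᵢ[ℝ] Lp ℝ ∞ μ)
    (A : Set Ω) (hA : MeasurableSet A) (χ : Lp ℝ ∞ μ)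
    (hχ : (χ : Ω → ℝ) =ᵐ[μ] Set.indicator A fun _ => (1:ℝ))
    (hTS : T χ ≠ S χ) :
    1 ≤ ‖T χ - S χ‖ :=
  stmt12_general μ T S A χ hχ hTS
end

section
/- Let X, Y be Banach spaces, 1 ≤ p < ∞, and suppose Z = X ⊕ Y with ‖(x,y)‖^p = ‖x‖^p + ‖y‖^p. Then the projections P(x,y) = (x,0) and Q(x,y) = (0,y) are L^p-projections, and any two L^p-projections on a Banach space Z with p ≠ 2 commute. -/
/-!
If `P` is an `L^q`-projection, then `‖y + t • w‖ ^ q = ‖y‖ ^ q + |t| ^ q * ‖w‖ ^ q` whenever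
`P y = y` and `P w = 0`. Let `Q` be a second one and `Q x = x`. Decomposing
`P x + t • (x - P x)` first along `P`, then along `Q`, gives
`‖Q (P x) + t • Q (x - P x)‖ ^ q = ‖P x‖ ^ q + |t| ^ q * ‖x - P x‖ ^ q - |1 - t| ^ q * c`
with `c = ‖P x - Q (P x)‖ ^ q`. The left side is convex in `t`. For `q < 2` the term
`-|1 - t| ^ q * c` has a concave cusp at `t = 1`, of order `ε ^ q`, which the other terms,
of order `ε ^ 2`, cannot compensate; for `q > 2` the roles are swapped at `t = 0`. Hence `c = 0`,
so `P` maps the range of `Q` into itself; applied to `1 - Q` as well, this gives `P Q = Q P`.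
-/

open ENNReal

def IsLpProjection (q : ℝ) {Z : Type*} [NormedAddCommGroup Z] [NormedSpace ℝ Z]
    (P : Z →L[ℝ] Z) : Prop :=
  (∀ z, P (P z) = P z) ∧ ∀ z, ‖z‖ ^ q = ‖P z‖ ^ q + ‖z - P z‖ ^ q

open Set Filter Topology

theorem rpow_eq_sq_rpow_half {x : ℝ} (hx : 0 ≤ x) (q : ℝ) : x ^ q = (x ^ 2) ^ (q / 2) := by
  rw [← Real.rpow_two, ← Real.rpow_mul hx]
  ring_nf

theorem one_add_rpow_add_one_sub_rpow_le {q ε : ℝ} (hq₀ : 0 ≤ q) (hq₂ : q ≤ 2)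
    (hε₀ : 0 ≤ ε) (hε₁ : ε ≤ 1) : (1 + ε) ^ q + (1 - ε) ^ q ≤ 2 + q * ε ^ 2 := by
  have hmean := (Real.concaveOn_rpow (p := q / 2) (by linarith) (by linarith)).2
    (sq_nonneg (1 + ε)) (sq_nonneg (1 - ε)) (by norm_num : (0 : ℝ) ≤ 1 / 2)
    (by norm_num : (0 : ℝ) ≤ 1 / 2) (by norm_num)
  have hbernoulli : (1 + ε ^ 2) ^ (q / 2) ≤ 1 + q / 2 * ε ^ 2 :=
    rpow_one_add_le_one_add_mul_self (by nlinarith) (by linarith) (by linarith)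
  rw [rpow_eq_sq_rpow_half (by linarith : 0 ≤ 1 + ε) q,
    rpow_eq_sq_rpow_half (by linarith : 0 ≤ 1 - ε) q]
  simp only [smul_eq_mul] at hmean
  have hmid : 1 / 2 * (1 + ε) ^ 2 + 1 / 2 * (1 - ε) ^ 2 = 1 + ε ^ 2 := by ring
  rw [hmid] at hmean
  linarith

theorem le_one_add_rpow_add_one_sub_rpow {q ε : ℝ} (hq₂ : 2 ≤ q)
    (hε₀ : 0 ≤ ε) (hε₁ : ε ≤ 1) : 2 + q * ε ^ 2 ≤ (1 + ε) ^ q + (1 - ε) ^ q := by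
  have hmean := (convexOn_rpow (p := q / 2) (by linarith)).2
    (sq_nonneg (1 + ε)) (sq_nonneg (1 - ε)) (by norm_num : (0 : ℝ) ≤ 1 / 2)
    (by norm_num : (0 : ℝ) ≤ 1 / 2) (by norm_num)
  have hbernoulli : 1 + q / 2 * ε ^ 2 ≤ (1 + ε ^ 2) ^ (q / 2) :=
    one_add_mul_self_le_rpow_one_add (by nlinarith) (by linarith)
  rw [rpow_eq_sq_rpow_half (by linarith : 0 ≤ 1 + ε) q,
    rpow_eq_sq_rpow_half (by linarith : 0 ≤ 1 - ε) q]
  simp only [smul_eq_mul] at hmean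
  have hmid : 1 / 2 * (1 + ε) ^ 2 + 1 / 2 * (1 - ε) ^ 2 = 1 + ε ^ 2 := by ring
  rw [hmid] at hmean
  linarith

theorem nonpos_of_forall_mul_rpow_le_mul_rpow {c K q s : ℝ} (hqs : q < s)
    (h : ∀ ε ∈ Ioc (0 : ℝ) 1, c * ε ^ q ≤ K * ε ^ s) : c ≤ 0 := by
  have hbound : ∀ ε ∈ Ioc (0 : ℝ) 1, c ≤ K * ε ^ (s - q) := fun ε hε => by
    have hεq : 0 < ε ^ q := Real.rpow_pos_of_pos hε.1 q
    have hsplit : ε ^ s = ε ^ (s - q) * ε ^ q := by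
      rw [← Real.rpow_add hε.1]; ring_nf
    refine le_of_mul_le_mul_right ?_ hεq
    rw [mul_assoc, ← hsplit]
    exact h ε hε
  have hlim : Tendsto (fun ε : ℝ => K * ε ^ (s - q)) (𝓝[>] 0) (𝓝 0) := by
    have hcont : ContinuousAt (fun ε : ℝ => K * ε ^ (s - q)) 0 :=
      continuousAt_const.mul (Real.continuousAt_rpow_const _ _ (Or.inr (by linarith)))
    simpa [Real.zero_rpow (by linarith : s - q ≠ 0)] using
      hcont.tendsto.mono_left nhdsWithin_le_nhds
  exact ge_of_tendsto hlim (eventually_of_mem (Ioc_mem_nhdsGT one_pos) hbound)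

theorem nonpos_of_midpoint_convex_rpow_combination {q D E c : ℝ} {φ : ℝ → ℝ} (hq₀ : 0 < q)
    (hq₂ : q ≠ 2) (hE : 0 ≤ E) (hφ : ∀ t, φ t = D + |t| ^ q * E - |1 - t| ^ q * c)
    (hmid : ∀ t ε, 2 * φ t ≤ φ (t + ε) + φ (t - ε)) : c ≤ 0 := by
  by_contra! hc
  rcases hq₂.lt_or_gt with hq₂ | hq₂
  · -- the cusp of `-|1 - t| ^ q * c` at `t = 1` beats the quadratic growth of `|t| ^ q * E`
    refine hc.not_ge (nonpos_of_forall_mul_rpow_le_mul_rpow (K := q * E / 2) hq₂ fun ε hε => ?_)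
    have hcenter : φ 1 = D + E := by simp [hφ, Real.zero_rpow hq₀.ne']
    have hright : φ (1 + ε) = D + (1 + ε) ^ q * E - ε ^ q * c := by
      rw [hφ, abs_of_pos (by linarith [hε.1]), sub_add_cancel_left, abs_neg, abs_of_pos hε.1]
    have hleft : φ (1 - ε) = D + (1 - ε) ^ q * E - ε ^ q * c := by
      rw [hφ, abs_of_nonneg (sub_nonneg.2 hε.2), _root_.sub_sub_cancel, abs_of_pos hε.1]
    have hψ := one_add_rpow_add_one_sub_rpow_le hq₀.le hq₂.le hε.1.le hε.2
    have := hmid 1 ε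
    rw [hcenter, hright, hleft] at this
    rw [Real.rpow_two]
    nlinarith [mul_le_mul_of_nonneg_right hψ hE]
  · -- at `t = 0` the concavity of `-|1 - t| ^ q * c` beats the flat `|t| ^ q * E`
    refine hc.not_ge (nonpos_of_forall_mul_rpow_le_mul_rpow (K := 2 * E / q) hq₂ fun ε hε => ?_)
    have hcenter : φ 0 = D - c := by simp [hφ, Real.zero_rpow hq₀.ne']
    have hright : φ (0 + ε) = D + ε ^ q * E - (1 - ε) ^ q * c := by
      rw [hφ, zero_add, abs_of_pos hε.1, abs_of_nonneg (sub_nonneg.2 hε.2)]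
    have hleft : φ (0 - ε) = D + ε ^ q * E - (1 + ε) ^ q * c := by
      rw [hφ, zero_sub, abs_neg, abs_of_pos hε.1, sub_neg_eq_add,
        abs_of_pos (by linarith [hε.1])]
    have hψ := le_one_add_rpow_add_one_sub_rpow hq₂.le hε.1.le hε.2
    have := hmid 0 ε
    rw [hcenter, hright, hleft] at this
    rw [Real.rpow_two, div_mul_eq_mul_div, le_div_iff₀ hq₀]
    nlinarith [mul_le_mul_of_nonneg_right hψ hc.le]

theorem two_mul_norm_rpow_le_add {E : Type*} [SeminormedAddCommGroup E] [NormedSpace ℝ E]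
    {q : ℝ} (hq : 1 ≤ q) (x y : E) : 2 * ‖(1 / 2 : ℝ) • (x + y)‖ ^ q ≤ ‖x‖ ^ q + ‖y‖ ^ q := by
  have htri : ‖(1 / 2 : ℝ) • (x + y)‖ ≤ 1 / 2 * ‖x‖ + 1 / 2 * ‖y‖ := by
    rw [norm_smul, Real.norm_of_nonneg (by norm_num)]
    nlinarith [norm_add_le x y]
  have hconv := (convexOn_rpow hq).2 (norm_nonneg x) (norm_nonneg y)
    (by norm_num : (0 : ℝ) ≤ 1 / 2) (by norm_num : (0 : ℝ) ≤ 1 / 2) (by norm_num)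
  simp only [smul_eq_mul] at hconv
  linarith [Real.rpow_le_rpow (norm_nonneg _) htri (by linarith : 0 ≤ q)]

namespace IsLpProjection

variable {q : ℝ} {Z : Type*} [NormedAddCommGroup Z] [NormedSpace ℝ Z] {P Q : Z →L[ℝ] Z}

theorem one_sub (hQ : IsLpProjection q Q) : IsLpProjection q (1 - Q) := by
  refine ⟨fun z => ?_, fun z => ?_⟩
  · simp only [_root_.sub_apply, one_apply_eq_self, map_sub, hQ.1]
    abel
  · simp only [_root_.sub_apply, one_apply_eq_self]
    rw [hQ.2 z, _root_.sub_sub_cancel, add_comm]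

theorem norm_rpow_add_smul (hP : IsLpProjection q P) {y w : Z} (hy : P y = y) (hw : P w = 0)
    (t : ℝ) : ‖y + t • w‖ ^ q = ‖y‖ ^ q + |t| ^ q * ‖w‖ ^ q := by
  have hPyw : P (y + t • w) = y := by rw [map_add, map_smul, hy, hw, smul_zero, add_zero]
  rw [hP.2, hPyw, add_sub_cancel_left, norm_smul, Real.norm_eq_abs,
    Real.mul_rpow (abs_nonneg t) (norm_nonneg w)]

theorem apply_apply_eq_of_apply_eq (hq₁ : 1 ≤ q) (hq₂ : q ≠ 2) (hP : IsLpProjection q P)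
    (hQ : IsLpProjection q Q) {x : Z} (hx : Q x = x) : Q (P x) = P x := by
  set c := ‖P x - Q (P x)‖ ^ q
  have hPPx : P (P x) = P x := hP.1 x
  have hPker : P (x - P x) = 0 := by rw [map_sub, hPPx, sub_self]
  have hφ : ∀ t : ℝ, ‖Q (P x) + t • Q (x - P x)‖ ^ q =
      ‖P x‖ ^ q + |t| ^ q * ‖x - P x‖ ^ q - |1 - t| ^ q * c := by
    intro t
    have hdecomp := hQ.2 (P x + t • (x - P x))
    have hcompl : P x + t • (x - P x) - Q (P x + t • (x - P x)) = (1 - t) • (P x - Q (P x)) := by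
      rw [map_add, map_smul, map_sub, hx]
      module
    rw [hP.norm_rpow_add_smul hPPx hPker, hcompl, norm_smul, Real.norm_eq_abs,
      Real.mul_rpow (abs_nonneg _) (norm_nonneg _), map_add, map_smul] at hdecomp
    linarith
  have hmid : ∀ t ε : ℝ, 2 * ‖Q (P x) + t • Q (x - P x)‖ ^ q ≤
      ‖Q (P x) + (t + ε) • Q (x - P x)‖ ^ q + ‖Q (P x) + (t - ε) • Q (x - P x)‖ ^ q := by
    intro t ε
    have hmidpoint : Q (P x) + t • Q (x - P x) = (1 / 2 : ℝ) •
        ((Q (P x) + (t + ε) • Q (x - P x)) + (Q (P x) + (t - ε) • Q (x - P x))) := by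
      module
    rw [hmidpoint]
    exact two_mul_norm_rpow_le_add hq₁ _ _
  have hc : c ≤ 0 := nonpos_of_midpoint_convex_rpow_combination (by linarith) hq₂
    (Real.rpow_nonneg (norm_nonneg _) q) hφ hmid
  have hc0 : ‖P x - Q (P x)‖ = 0 := by
    by_contra hne
    exact hc.not_gt (Real.rpow_pos_of_pos ((norm_nonneg _).lt_of_ne' hne) q)
  exact (sub_eq_zero.mp (norm_eq_zero.mp hc0)).symm

theorem commute (hq₁ : 1 ≤ q) (hq₂ : q ≠ 2) (hP : IsLpProjection q P) (hQ : IsLpProjection q Q)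
    (z : Z) : P (Q z) = Q (P z) := by
  have hrange : Q (P (Q z)) = P (Q z) := apply_apply_eq_of_apply_eq hq₁ hq₂ hP hQ (hQ.1 z)
  have hker : (1 - Q) (P (z - Q z)) = P (z - Q z) :=
    apply_apply_eq_of_apply_eq hq₁ hq₂ hP hQ.one_sub (by simp [hQ.1])
  simp only [_root_.sub_apply, one_apply_eq_self, map_sub, hrange, sub_self, sub_zero] at hker
  exact (sub_right_inj.mp hker).symm

end IsLpProjection

namespace WithLp

theorem prod_norm_rpow_eq_add {p : ℝ≥0∞} [Fact (1 ≤ p)] {X Y : Type*} [SeminormedAddCommGroup X]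
    [SeminormedAddCommGroup Y] (hp : 0 < p.toReal) (z : WithLp p (X × Y)) :
    ‖z‖ ^ p.toReal = ‖z.fst‖ ^ p.toReal + ‖z.snd‖ ^ p.toReal := by
  rw [prod_norm_eq_add hp, ← Real.rpow_mul (by positivity), one_div, inv_mul_cancel₀ hp.ne',
    Real.rpow_one]

variable (p : ℝ≥0∞) (X Y : Type*) [NormedAddCommGroup X] [NormedSpace ℝ X]
  [NormedAddCommGroup Y] [NormedSpace ℝ Y]

def prodFstProjL : WithLp p (X × Y) →L[ℝ] WithLp p (X × Y) :=
  (prodContinuousLinearEquiv p ℝ X Y).symm.toContinuousLinearMap ∘L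
    ContinuousLinearMap.inl ℝ X Y ∘L fstL p ℝ X Y

variable {p X Y}

theorem prodFstProjL_apply (z : WithLp p (X × Y)) :
    prodFstProjL p X Y z = (WithLp.equiv p (X × Y)).symm ((WithLp.equiv p (X × Y) z).1, 0) :=
  rfl

variable [Fact (1 ≤ p)]

theorem one_sub_prodFstProjL_apply (z : WithLp p (X × Y)) :
    (1 - prodFstProjL p X Y) z =
      (WithLp.equiv p (X × Y)).symm (0, (WithLp.equiv p (X × Y) z).2) := by
  apply (WithLp.equiv p (X × Y)).injective
  ext <;> simp [prodFstProjL_apply]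

theorem isLpProjection_prodFstProjL (hp : p ≠ ∞) :
    IsLpProjection p.toReal (prodFstProjL p X Y) := by
  have hp₀ : 0 < p.toReal := ENNReal.toReal_pos (zero_lt_one.trans_le Fact.out).ne' hp
  refine ⟨fun z => rfl, fun z => ?_⟩
  simp [prod_norm_rpow_eq_add hp₀, prodFstProjL_apply, Real.zero_rpow hp₀.ne']

end WithLp

theorem stmt14_general {X Y : Type*} [NormedAddCommGroup X] [NormedSpace ℝ X]
    [NormedAddCommGroup Y] [NormedSpace ℝ Y]
    (p : ℝ≥0∞) [Fact (1 ≤ p)] (hp : p ≠ ∞) :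
    (∃ P Q : WithLp p (X × Y) →L[ℝ] WithLp p (X × Y),
      (∀ z, P z = (WithLp.equiv p (X × Y)).symm ((WithLp.equiv p (X × Y) z).1, 0)) ∧
      (∀ z, Q z = (WithLp.equiv p (X × Y)).symm (0, (WithLp.equiv p (X × Y) z).2)) ∧
      IsLpProjection p.toReal P ∧ IsLpProjection p.toReal Q) ∧
    (p ≠ 2 → ∀ (Z : Type*) [NormedAddCommGroup Z] [NormedSpace ℝ Z] [CompleteSpace Z]
      (P Q : Z →L[ℝ] Z), IsLpProjection p.toReal P → IsLpProjection p.toReal Q →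
        ∀ z, P (Q z) = Q (P z)) := by
  have hP := WithLp.isLpProjection_prodFstProjL (X := X) (Y := Y) hp
  refine ⟨⟨_, _, WithLp.prodFstProjL_apply, WithLp.one_sub_prodFstProjL_apply, hP, hP.one_sub⟩,
    fun hp₂ Z _ _ _ P Q hP hQ => hP.commute ?_ ?_ hQ⟩
  · simpa using ENNReal.toReal_mono hp (Fact.out : 1 ≤ p)
  · intro h
    exact hp₂ (by rw [← ENNReal.ofReal_toReal hp, h, ENNReal.ofReal_ofNat])

/-- on `Z = X ⊕_p Y` the coordinate projections are `L^p`-projections,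
and for `p ≠ 2` any two `L^p`-projections on a Banach space commute. -/
theorem stmt14 {X Y : Type*} [NormedAddCommGroup X] [NormedSpace ℝ X] [CompleteSpace X]
    [NormedAddCommGroup Y] [NormedSpace ℝ Y] [CompleteSpace Y]
    (p : ℝ≥0∞) [Fact (1 ≤ p)] (hp : p ≠ ∞) :
    (∃ P Q : WithLp p (X × Y) →L[ℝ] WithLp p (X × Y),
      (∀ z, P z = (WithLp.equiv p (X × Y)).symm ((WithLp.equiv p (X × Y) z).1, 0)) ∧
      (∀ z, Q z = (WithLp.equiv p (X × Y)).symm (0, (WithLp.equiv p (X × Y) z).2)) ∧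
      IsLpProjection p.toReal P ∧ IsLpProjection p.toReal Q) ∧
    (p ≠ 2 → ∀ (Z : Type*) [NormedAddCommGroup Z] [NormedSpace ℝ Z] [CompleteSpace Z]
      (P Q : Z →L[ℝ] Z), IsLpProjection p.toReal P → IsLpProjection p.toReal Q →
        ∀ z, P (Q z) = Q (P z)) :=
  stmt14_general p hp
end
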